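/- arXiv:0905.2850 — 4 statements merged into one kernel-verified Lean document; each statement's English description precedes it below -/
import Mathlib

section
/- Let q be a real number with 0 < |q| < 1. Then (1 - q²) · ((1 - √(1 - q²))² + q²(1 - √(1 - q⁴))² + Σ_{n≥2} q^{2n}(2 - q^{2n+2})) ≤ 9 q⁴. -/
/-! With `t = q²`, the first two terms are at most `t²` and `t · t⁴`, because `1 - x ≤ √(1 - x)`
on `[0, 1]`, and the `n`-th term of the series is at most `2 t² · tⁿ`; summing the geometric
series, the left-hand side is at most `(1 - t)(t² + t⁵) + 2t² ≤ 4t²`. -/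

open Real

lemma one_sub_sqrt_one_sub_sq_le {x : ℝ} (hx0 : 0 ≤ x) (hx1 : x ≤ 1) :
    (1 - √(1 - x)) ^ 2 ≤ x ^ 2 := by
  have hle : 1 - x ≤ √(1 - x) := by
    rw [le_sqrt (by linarith) (by linarith)]
    nlinarith
  have hsqrt_le : √(1 - x) ≤ 1 := sqrt_le_one.mpr (by linarith)
  exact pow_le_pow_left₀ (by linarith) (by linarith) 2

lemma one_sub_mul_tsum_le_of_le_geometric {f : ℕ → ℝ} {c t : ℝ} (ht0 : 0 ≤ t) (ht1 : t < 1)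
    (hf0 : ∀ n, 0 ≤ f n) (hf : ∀ n, f n ≤ c * t ^ n) :
    (1 - t) * ∑' n, f n ≤ c := by
  have hgeom : Summable fun n => c * t ^ n := (summable_geometric_of_lt_one ht0 ht1).mul_left c
  have hsum : ∑' n, f n ≤ c * (1 - t)⁻¹ := by
    calc ∑' n, f n ≤ ∑' n, c * t ^ n := (hgeom.of_nonneg_of_le hf0 hf).tsum_le_tsum hf hgeom
      _ = c * (1 - t)⁻¹ := by rw [tsum_mul_left, tsum_geometric_of_lt_one ht0 ht1]
  have hne : 1 - t ≠ 0 := by linarith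
  calc (1 - t) * ∑' n, f n ≤ (1 - t) * (c * (1 - t)⁻¹) := by gcongr
    _ = c := by field_simp

lemma one_sub_mul_tsum_pow_mul_two_sub_pow_le {t : ℝ} (ht0 : 0 ≤ t) (ht1 : t < 1) :
    (1 - t) * ∑' n : ℕ, t ^ (n + 2) * (2 - t ^ (n + 3)) ≤ 2 * t ^ 2 := by
  have hpow_le : ∀ n, t ^ (n + 3) ≤ 1 := fun n => pow_le_one₀ ht0 ht1.le
  refine one_sub_mul_tsum_le_of_le_geometric ht0 ht1 (fun n => ?_) (fun n => ?_)
  · exact mul_nonneg (by positivity) (by linarith [hpow_le n])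
  · have : 0 ≤ t ^ (n + 3) := by positivity
    calc t ^ (n + 2) * (2 - t ^ (n + 3)) ≤ t ^ (n + 2) * 2 := by gcongr; linarith
      _ = 2 * t ^ 2 * t ^ n := by ring

lemma haar_state_series_le {t : ℝ} (ht0 : 0 ≤ t) (ht1 : t < 1) :
    (1 - t) * ((1 - √(1 - t)) ^ 2 + t * (1 - √(1 - t ^ 2)) ^ 2 +
        ∑' n : ℕ, t ^ (n + 2) * (2 - t ^ (n + 3))) ≤ 4 * t ^ 2 := by
  have hA := one_sub_sqrt_one_sub_sq_le ht0 ht1.le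
  have hB := one_sub_sqrt_one_sub_sq_le (pow_nonneg ht0 2) (pow_le_one₀ ht0 ht1.le)
  have hS := one_sub_mul_tsum_pow_mul_two_sub_pow_le ht0 ht1
  have hfirst : (1 - t) * ((1 - √(1 - t)) ^ 2 + t * (1 - √(1 - t ^ 2)) ^ 2) ≤ 2 * t ^ 2 := by
    calc (1 - t) * ((1 - √(1 - t)) ^ 2 + t * (1 - √(1 - t ^ 2)) ^ 2)
        ≤ 1 * (t ^ 2 + t * (t ^ 2) ^ 2) := by gcongr; linarith
      _ ≤ 2 * t ^ 2 := by nlinarith [pow_nonneg ht0 2, pow_le_one₀ (n := 3) ht0 ht1.le]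
  linarith [mul_add (1 - t) ((1 - √(1 - t)) ^ 2 + t * (1 - √(1 - t ^ 2)) ^ 2)
    (∑' n : ℕ, t ^ (n + 2) * (2 - t ^ (n + 3)))]

theorem stmt_2_general (q : ℝ) (h1 : |q| < 1) :
    (1 - q ^ 2) *
      ((1 - Real.sqrt (1 - q ^ 2)) ^ 2 + q ^ 2 * (1 - Real.sqrt (1 - q ^ 4)) ^ 2 +
        ∑' n : ℕ, q ^ (2 * (n + 2)) * (2 - q ^ (2 * (n + 2) + 2)))
      ≤ 9 * q ^ 4 := by
  have hterm : ∀ n : ℕ, q ^ (2 * (n + 2)) * (2 - q ^ (2 * (n + 2) + 2)) =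
      (q ^ 2) ^ (n + 2) * (2 - (q ^ 2) ^ (n + 3)) := fun n => by ring
  have hq4 : q ^ 4 = (q ^ 2) ^ 2 := by ring
  simp_rw [hterm, hq4]
  have := haar_state_series_le (sq_nonneg q) ((sq_lt_one_iff_abs_lt_one q).mpr h1)
  linarith [pow_nonneg (sq_nonneg q) 2]

theorem stmt_2 (q : ℝ) (h0 : 0 < |q|) (h1 : |q| < 1) :
    (1 - q ^ 2) *
      ((1 - Real.sqrt (1 - q ^ 2)) ^ 2 + q ^ 2 * (1 - Real.sqrt (1 - q ^ 4)) ^ 2 +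
        ∑' n : ℕ, q ^ (2 * (n + 2)) * (2 - q ^ (2 * (n + 2) + 2)))
      ≤ 9 * q ^ 4 :=
  stmt_2_general q h1
end

section
/- Let (H_n, ξ_n) be a sequence of Hilbert spaces with distinguished unit vectors, and let η_n ∈ H_n be nonzero vectors with ‖η_n‖ ≤ 1 such that Σ_n |1 - ⟨η_n, ξ_n⟩| < ∞. Then the sequence of vectors (η_1 ⊗ ⋯ ⊗ η_n ⊗ ξ_{n+1} ⊗ ξ_{n+2} ⊗ ⋯) in the infinite tensor product Hilbert space ⊗_{n}(H_n, ξ_n) converges in norm to a nonzero vector. -/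
/-!
By Cauchy–Schwarz `‖⟪η k, ξ k⟫‖ ≤ 1`, and the Gram relations say that for `m ≤ n`
`⟪v n, v m⟫ = ‖v m‖² ∏_{m<k≤n} ⟪η k, ξ k⟫`, while `‖v n‖² = ∏_{k≤n} ‖η k‖²` decreases and
stays `≤ 1`. Expanding the square then gives
`‖v n - v m‖² ≤ 2 ‖1 - ∏_{m<k≤n} ⟪η k, ξ k⟫‖ ≤ 2 ∑_{m<k≤n} ‖1 - ⟪η k, ξ k⟫‖`,
so `(v n)` is Cauchy. The squared norm of its limit is the infinite product `∏ ‖η k‖²` of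
positive factors with `∑ (1 - ‖η k‖²) ≤ 2 ∑ ‖1 - ⟪η k, ξ k⟫‖ < ∞`, which is positive.
-/

open scoped InnerProductSpace

open Finset

theorem Finset.norm_one_sub_prod_le_sum {ι R : Type*} [SeminormedCommRing R] (s : Finset ι)
    (c : ι → R) (hc : ∀ k ∈ s, ‖c k‖ ≤ 1) : ‖1 - ∏ k ∈ s, c k‖ ≤ ∑ k ∈ s, ‖1 - c k‖ := by
  classical
  induction s using Finset.induction_on with
  | empty => simp
  | insert a s ha ih =>
    rw [prod_insert ha, sum_insert ha,
      show 1 - c a * ∏ k ∈ s, c k = (1 - c a) + c a * (1 - ∏ k ∈ s, c k) by ring]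
    have hca : ‖c a‖ ≤ 1 := hc a (mem_insert_self a s)
    have ih := ih fun k hk => hc k (mem_insert_of_mem hk)
    calc ‖(1 - c a) + c a * (1 - ∏ k ∈ s, c k)‖
        ≤ ‖1 - c a‖ + ‖c a‖ * ‖1 - ∏ k ∈ s, c k‖ := norm_add_le_of_le le_rfl (norm_mul_le _ _)
      _ ≤ ‖1 - c a‖ + ∑ k ∈ s, ‖1 - c k‖ := by
        gcongr
        exact (mul_le_of_le_one_left (norm_nonneg _) hca).trans ih

theorem Real.exists_pos_hasProd_of_summable_sub_one {ι : Type*} {b : ι → ℝ} (hb : ∀ k, 0 < b k)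
    (hs : Summable fun k => b k - 1) : ∃ P, 0 < P ∧ HasProd b P := by
  have hlog : Summable fun k => Real.log (b k) := by
    simpa using Real.summable_log_one_add_of_summable hs
  exact ⟨_, Real.exp_pos _, Real.hasProd_of_hasSum_log hb hlog.hasSum⟩

theorem cauchySeq_of_dist_sq_le_sum {E : Type*} [PseudoMetricSpace E] {v : ℕ → E} {f : ℕ → ℝ}
    (hf0 : ∀ k, 0 ≤ f k) (hf : Summable f)
    (hv : ∀ m n, m ≤ n → dist (v m) (v n) ^ 2 ≤ ∑ k ∈ Ico m n, f k) : CauchySeq v := by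
  have htail : ∀ N n, N ≤ n → dist (v N) (v n) ≤ √(∑' k, f (k + N)) := by
    intro N n hn
    refine (le_abs_self _).trans (Real.abs_le_sqrt ((hv N n hn).trans ?_))
    rw [sum_Ico_eq_sum_range]
    simp_rw [add_comm N]
    exact ((summable_nat_add_iff N).2 hf).sum_le_tsum _ fun k _ => hf0 _
  refine cauchySeq_of_le_tendsto_0 (fun N => 2 * √(∑' k, f (k + N)))
    (fun n m N hn hm => ?_) ?_
  · calc dist (v n) (v m) ≤ dist (v N) (v n) + dist (v N) (v m) := dist_triangle_left _ _ _
      _ ≤ 2 * √(∑' k, f (k + N)) := by linarith [htail N n hn, htail N m hm]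
  · simpa using ((tendsto_sum_nat_add f).sqrt).const_mul 2

section InnerProductSpace

variable {𝕜 E : Type*} [RCLike 𝕜] [NormedAddCommGroup E] [InnerProductSpace 𝕜 E]

theorem norm_sub_sq_le_of_inner_eq_mul {x y : E} {c : 𝕜} (h : ⟪x, y⟫_𝕜 = (‖y‖ ^ 2 : 𝕜) * c)
    (hxy : ‖x‖ ≤ ‖y‖) (hy : ‖y‖ ≤ 1) : ‖x - y‖ ^ 2 ≤ 2 * ‖1 - c‖ := by
  have hre : RCLike.re ⟪x, y⟫_𝕜 = ‖y‖ ^ 2 * RCLike.re c := by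
    rw [h, ← RCLike.ofReal_pow, RCLike.re_ofReal_mul]
  have hc : 1 - RCLike.re c ≤ ‖1 - c‖ := by
    simpa using RCLike.re_le_norm (1 - c)
  have hy2 : ‖y‖ ^ 2 ≤ 1 := pow_le_one₀ (norm_nonneg _) hy
  have hxy2 : ‖x‖ ^ 2 ≤ ‖y‖ ^ 2 := pow_le_pow_left₀ (norm_nonneg _) hxy 2
  rw [@norm_sub_sq 𝕜, hre]
  nlinarith [norm_nonneg (1 - c), sq_nonneg ‖y‖]

theorem one_sub_norm_sq_le_two_mul_norm_one_sub_inner {η ξ : E} (hη : ‖η‖ ≤ 1) (hξ : ‖ξ‖ = 1) :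
    1 - ‖η‖ ^ 2 ≤ 2 * ‖1 - ⟪η, ξ⟫_𝕜‖ := by
  have hinner : ‖⟪η, ξ⟫_𝕜‖ ≤ ‖η‖ := by simpa [hξ] using norm_inner_le_norm (𝕜 := 𝕜) η ξ
  have h1 : 1 - ‖⟪η, ξ⟫_𝕜‖ ≤ ‖1 - ⟪η, ξ⟫_𝕜‖ := by simpa using norm_sub_norm_le (1 : 𝕜) ⟪η, ξ⟫_𝕜
  nlinarith [norm_nonneg η]

theorem cauchySeq_of_inner_eq_mul_prod {v : ℕ → E} {a : ℕ → 𝕜} (ha : ∀ k, ‖a k‖ ≤ 1)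
    (hsum : Summable fun k => ‖1 - a k‖) (hanti : Antitone fun n => ‖v n‖)
    (hle : ∀ n, ‖v n‖ ≤ 1)
    (hv : ∀ m n, m ≤ n → ⟪v n, v m⟫_𝕜 = (‖v m‖ ^ 2 : 𝕜) * ∏ k ∈ Ico (m + 1) (n + 1), a k) :
    CauchySeq v := by
  refine cauchySeq_of_dist_sq_le_sum (f := fun k => 2 * ‖1 - a (k + 1)‖)
    (fun k => by positivity) (((summable_nat_add_iff 1).2 hsum).mul_left 2) fun m n hmn => ?_
  rw [dist_comm, dist_eq_norm, ← mul_sum, sum_Ico_add' (fun k => ‖1 - a k‖)]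
  exact (norm_sub_sq_le_of_inner_eq_mul (hv m n hmn) (hanti hmn) (hle m)).trans <|
    mul_le_mul_of_nonneg_left (norm_one_sub_prod_le_sum _ _ fun k _ => ha k) zero_le_two

end InnerProductSpace

/-- Infinite tensor product of pointed Hilbert spaces, encoded via the inner
products of the partial tensor vectors `v n = η 0 ⊗ ⋯ ⊗ η n ⊗ ξ (n+1) ⊗ ⋯`. -/
theorem stmt_5
    {ι : ℕ → Type*} [∀ n, NormedAddCommGroup (ι n)] [∀ n, InnerProductSpace ℂ (ι n)]
    (ξ : ∀ n, ι n) (hξ : ∀ n, ‖ξ n‖ = 1)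
    (η : ∀ n, ι n) (hη0 : ∀ n, η n ≠ 0) (hη1 : ∀ n, ‖η n‖ ≤ 1)
    (hsum : Summable fun n => ‖(1 : ℂ) - ⟪η n, ξ n⟫_ℂ‖)
    {K : Type*} [NormedAddCommGroup K] [InnerProductSpace ℂ K] [CompleteSpace K]
    (v : ℕ → K)
    (hv : ∀ m n : ℕ, m ≤ n →
      ⟪v n, v m⟫_ℂ =
        (∏ k ∈ Finset.range (m + 1), ⟪η k, η k⟫_ℂ) *
          ∏ k ∈ Finset.Ico (m + 1) (n + 1), ⟪η k, ξ k⟫_ℂ) :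
    ∃ L : K, L ≠ 0 ∧ Filter.Tendsto v Filter.atTop (nhds L) := by
  have hηη : ∀ m, ∏ k ∈ range (m + 1), ⟪η k, η k⟫_ℂ = (‖v m‖ ^ 2 : ℂ) := fun m => by
    simpa [inner_self_eq_norm_sq_to_K] using (hv m m le_rfl).symm
  have hnorm : ∀ n, ‖v n‖ ^ 2 = ∏ k ∈ range (n + 1), ‖η k‖ ^ 2 := fun n => by
    have h := (hηη n).symm
    simp only [inner_self_eq_norm_sq_to_K] at h
    exact RCLike.ofReal_injective (K := ℂ) (by push_cast; exact h)
  have hb1 : ∀ k, ‖η k‖ ^ 2 ≤ 1 := fun k => pow_le_one₀ (norm_nonneg _) (hη1 k)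
  have hanti : Antitone fun n => ‖v n‖ := antitone_nat_of_succ_le fun n => by
    rw [← pow_le_pow_iff_left₀ (norm_nonneg _) (norm_nonneg _) two_ne_zero, hnorm, hnorm,
      prod_range_succ]
    exact mul_le_of_le_one_right (prod_nonneg fun k _ => by positivity) (hb1 _)
  have hle : ∀ n, ‖v n‖ ≤ 1 := fun n => by
    rw [← pow_le_one_iff_of_nonneg (norm_nonneg _) two_ne_zero, hnorm]
    exact prod_le_one (fun k _ => by positivity) fun k _ => hb1 k
  have ha : ∀ k, ‖⟪η k, ξ k⟫_ℂ‖ ≤ 1 := fun k =>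
    (norm_inner_le_norm _ _).trans (by rw [hξ, mul_one]; exact hη1 k)
  obtain ⟨L, hL⟩ := cauchySeq_tendsto_of_complete <|
    cauchySeq_of_inner_eq_mul_prod ha hsum hanti hle fun m n hmn => by rw [hv m n hmn, hηη]; rfl
  obtain ⟨P, hP, hprod⟩ := Real.exists_pos_hasProd_of_summable_sub_one
    (fun k => pow_pos (norm_pos_iff.2 (hη0 k)) 2) <|
    hsum.mul_left 2 |>.of_norm_bounded fun k => by
      rw [Real.norm_eq_abs, abs_of_nonpos (by linarith [hb1 k]), neg_sub]
      exact one_sub_norm_sq_le_two_mul_norm_one_sub_inner (hη1 k) (hξ k)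
  have hLP : ‖L‖ ^ 2 = P := tendsto_nhds_unique (hL.norm.pow 2) <| by
    simpa only [hnorm, Function.comp_def] using
      hprod.tendsto_prod_nat.comp (Filter.tendsto_add_atTop_nat 1)
  refine ⟨L, fun hL0 => hP.ne' ?_, hL⟩
  simpa [hL0] using hLP.symm
end

section
/- Let 0 < |q| < 1. In the representation of Proposition (π(a)ξ_{n,k} = √(1-q^{2n})ξ_{n-1,k}), the operator (w-a)(w-a)* has diagonal entries (1-√(1-q²))², (1-√(1-q⁴))², and 2-q^{2n+2} for n ≥ 2, with respect to the basis ξ_{n,0}, in the sense that ⟨(w-a)(w-a)* ξ_{n,0}, ξ_{n,0}⟩ equals these values. -/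
/-!
Since `⟪T T† x, x⟫ = ‖T† x‖²`, each diagonal entry is the squared norm of `(w - a)† ξ_{n,0}`.
Both `w` and `a` move each basis vector to a multiple of a single basis vector, so their adjoints
do too: `w† ξ_{n,0} = ξ_{p,0}` with `τ p = n`, and `a† ξ_{n,0} = √(1-q^{2n+2}) ξ_{n+1,0}`.
Hence the entry is `‖ξ_{p,0} - √(1-q^{2n+2}) ξ_{n+1,0}‖²`, which is `(1 - √(1-q^{2n+2}))²`
when `p = n + 1` (that is, `n = 0, 1`) and `1 + (1 - q^{2n+2}) = 2 - q^{2n+2}` otherwise.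
-/

open scoped InnerProductSpace ComplexConjugate
open ContinuousLinearMap

theorem Function.Injective.of_eq_cycle_zero_two_one {τ : ℕ → ℕ}
    (hτ : τ 0 = 2 ∧ τ 1 = 0 ∧ τ 2 = 1 ∧ ∀ n, 3 ≤ n → τ n = n) : Function.Injective τ := by
  obtain ⟨hτ0, hτ1, hτ2, hτ3⟩ := hτ
  have hτ_cases : ∀ m, (m = 0 ∧ τ m = 2) ∨ (m = 1 ∧ τ m = 0) ∨ (m = 2 ∧ τ m = 1) ∨
      (3 ≤ m ∧ τ m = m) := by
    rintro (_ | _ | _ | m)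
    exacts [by simp [hτ0], by simp [hτ1], by simp [hτ2], by simp [hτ3 (m + 3) (by omega)]]
  intro m m' h
  obtain h | h | h | h := hτ_cases m <;> obtain h' | h' | h' | h' := hτ_cases m' <;> omega

theorem Real.sq_sqrt_one_sub_pow_two_mul {q : ℝ} (hq : |q| ≤ 1) (m : ℕ) :
    Real.sqrt (1 - q ^ (2 * m)) ^ 2 = 1 - q ^ (2 * m) := by
  have : q ^ (2 * m) ≤ 1 := by
    rw [pow_mul]
    exact pow_le_one₀ (sq_nonneg q) ((sq_le_one_iff_abs_le_one q).mpr hq)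
  exact Real.sq_sqrt (by linarith)

theorem Orthonormal.norm_sub_smul_sq {𝕜 E ι : Type*} [RCLike 𝕜] [NormedAddCommGroup E]
    [InnerProductSpace 𝕜 E] [DecidableEq ι] {v : ι → E} (hv : Orthonormal 𝕜 v) (i j : ι) (c : 𝕜) :
    ‖v i - c • v j‖ ^ 2 = if i = j then ‖1 - c‖ ^ 2 else 1 + ‖c‖ ^ 2 := by
  split_ifs with hij
  · rw [hij, ← one_smul 𝕜 (v j), smul_smul, mul_one, ← sub_smul, norm_smul, hv.1 j, mul_one]
  · rw [norm_sub_sq (𝕜 := 𝕜), inner_smul_right, hv.2 hij, mul_zero, map_zero, norm_smul, hv.1 i,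
      hv.1 j]
    ring

section

variable {𝕜 E F : Type*} [RCLike 𝕜]
  [NormedAddCommGroup E] [InnerProductSpace 𝕜 E] [CompleteSpace E]
  [NormedAddCommGroup F] [InnerProductSpace 𝕜 F] [CompleteSpace F]

theorem ContinuousLinearMap.inner_comp_adjoint_apply_self (T : E →L[𝕜] F) (x : F) :
    ⟪(T ∘L adjoint T) x, x⟫_𝕜 = ((‖adjoint T x‖ ^ 2 : ℝ) : 𝕜) := by
  rw [comp_apply, ← adjoint_inner_right, inner_self_eq_norm_sq_to_K]
  push_cast
  rfl

theorem HilbertBasis.adjoint_apply_eq_smul {ι : Type*} (b : HilbertBasis ι 𝕜 E) (T : E →L[𝕜] F)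
    {y : F} (hy : ‖y‖ = 1) {i₀ : ι} {c : 𝕜} (hTi₀ : T (b i₀) = c • y)
    (hT : ∀ i ≠ i₀, ⟪T (b i), y⟫_𝕜 = 0) :
    adjoint T y = conj c • b i₀ := by
  classical
  apply b.repr.injective
  ext i
  rw [b.repr_apply_apply, b.repr_apply_apply, adjoint_inner_right, inner_smul_right,
    orthonormal_iff_ite.mp b.orthonormal]
  by_cases hi : i = i₀
  · rw [hi, hTi₀, inner_smul_left, inner_self_eq_norm_sq_to_K, hy]
    simp
  · rw [hT i hi, if_neg hi, mul_zero]

theorem HilbertBasis.adjoint_apply_of_injective {ι : Type*} (b : HilbertBasis ι 𝕜 E)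
    (T : E →L[𝕜] E) {σ : ι → ι} (hσ : Function.Injective σ) (hT : ∀ i, T (b i) = b (σ i))
    (i : ι) : adjoint T (b (σ i)) = b i := by
  simpa using b.adjoint_apply_eq_smul T (b.orthonormal.1 (σ i)) (c := 1) (by simp [hT])
    fun j hj => by rw [hT]; exact b.orthonormal.2 (hσ.ne hj)

theorem HilbertBasis.adjoint_apply_of_shift {κ : Type*} (b : HilbertBasis (ℕ × κ) 𝕜 E)
    (A : E →L[𝕜] E) (c : ℕ → 𝕜) (hA₀ : ∀ k, A (b (0, k)) = 0)
    (hA : ∀ n k, A (b (n + 1, k)) = c n • b (n, k)) (n : ℕ) (k : κ) :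
    adjoint A (b (n, k)) = conj (c n) • b (n + 1, k) := by
  refine b.adjoint_apply_eq_smul A (b.orthonormal.1 _) (hA n k) ?_
  rintro ⟨_ | m, l⟩ hml
  · rw [hA₀, inner_zero_left]
  · have hne : (m, l) ≠ (n, k) := by rintro ⟨⟩; exact hml rfl
    rw [hA, inner_smul_left, b.orthonormal.2 hne, mul_zero]

end

theorem stmt_13_general (q : ℝ) (h1 : |q| < 1)
    {H : Type*} [NormedAddCommGroup H] [InnerProductSpace ℂ H] [CompleteSpace H]
    (ξ : HilbertBasis (ℕ × ℤ) ℂ H)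
    (τ : ℕ → ℕ)
    (hτ : τ 0 = 2 ∧ τ 1 = 0 ∧ τ 2 = 1 ∧ ∀ n, 3 ≤ n → τ n = n)
    (a w : H →L[ℂ] H)
    (ha0 : ∀ k : ℤ, a (ξ (0, k)) = 0)
    (ha : ∀ (n : ℕ) (k : ℤ),
      a (ξ (n + 1, k)) = (Real.sqrt (1 - q ^ (2 * (n + 1))) : ℂ) • ξ (n, k))
    (hw : ∀ (n : ℕ) (k : ℤ), w (ξ (n, k)) = ξ (τ n, k)) :
    ⟪((w - a) ∘L adjoint (w - a)) (ξ (0, 0)), ξ (0, 0)⟫_ℂ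
      = (((1 - Real.sqrt (1 - q ^ 2)) ^ 2 : ℝ) : ℂ) ∧
    ⟪((w - a) ∘L adjoint (w - a)) (ξ (1, 0)), ξ (1, 0)⟫_ℂ
      = (((1 - Real.sqrt (1 - q ^ 4)) ^ 2 : ℝ) : ℂ) ∧
    ∀ n : ℕ, 2 ≤ n →
      ⟪((w - a) ∘L adjoint (w - a)) (ξ (n, 0)), ξ (n, 0)⟫_ℂ
        = (((2 - q ^ (2 * n + 2)) : ℝ) : ℂ) := by
  have hw_adj (p : ℕ) : adjoint w (ξ (τ p, 0)) = ξ (p, 0) :=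
    ξ.adjoint_apply_of_injective w ((Function.Injective.of_eq_cycle_zero_two_one hτ).prodMap
      Function.injective_id) (fun i => hw i.1 i.2) (p, 0)
  have hentry (p : ℕ) : ⟪((w - a) ∘L adjoint (w - a)) (ξ (τ p, 0)), ξ (τ p, 0)⟫_ℂ
      = ((if p = τ p + 1 then (1 - Real.sqrt (1 - q ^ (2 * (τ p + 1)))) ^ 2
          else 2 - q ^ (2 * τ p + 2) : ℝ) : ℂ) := by
    rw [inner_comp_adjoint_apply_self, RCLike.ofReal_eq_complex_ofReal, Complex.ofReal_inj,
      map_sub, sub_apply, hw_adj, ξ.adjoint_apply_of_shift a _ ha0 ha, Complex.conj_ofReal,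
      ξ.orthonormal.norm_sub_smul_sq]
    by_cases hp : p = τ p + 1
    · rw [if_pos (by rw [← hp]), if_pos hp, ← Complex.ofReal_one, ← Complex.ofReal_sub,
        Complex.norm_real, Real.norm_eq_abs, sq_abs]
    · rw [if_neg (by simpa using hp), if_neg hp, Complex.norm_real, Real.norm_eq_abs, sq_abs,
        Real.sq_sqrt_one_sub_pow_two_mul h1.le]
      ring
  obtain ⟨hτ0, hτ1, hτ2, hτ3⟩ := hτ
  refine ⟨by simpa [hτ1] using hentry 1, by simpa [hτ2] using hentry 2, fun n hn => ?_⟩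
  obtain ⟨p, rfl, hp⟩ : ∃ p, τ p = n ∧ p ≠ n + 1 := by
    obtain rfl | hn3 := hn.eq_or_lt
    exacts [⟨0, hτ0, by omega⟩, ⟨n, hτ3 n hn3, by omega⟩]
  rw [hentry p, if_neg hp]

theorem stmt_13 (q : ℝ) (h0 : 0 < |q|) (h1 : |q| < 1)
    {H : Type*} [NormedAddCommGroup H] [InnerProductSpace ℂ H] [CompleteSpace H]
    (ξ : HilbertBasis (ℕ × ℤ) ℂ H)
    (τ : ℕ → ℕ)
    (hτ : τ 0 = 2 ∧ τ 1 = 0 ∧ τ 2 = 1 ∧ ∀ n, 3 ≤ n → τ n = n)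
    (a w : H →L[ℂ] H)
    (ha0 : ∀ k : ℤ, a (ξ (0, k)) = 0)
    (ha : ∀ (n : ℕ) (k : ℤ),
      a (ξ (n + 1, k)) = (Real.sqrt (1 - q ^ (2 * (n + 1))) : ℂ) • ξ (n, k))
    (hw : ∀ (n : ℕ) (k : ℤ), w (ξ (n, k)) = ξ (τ n, k)) :
    ⟪((w - a) ∘L adjoint (w - a)) (ξ (0, 0)), ξ (0, 0)⟫_ℂ
      = (((1 - Real.sqrt (1 - q ^ 2)) ^ 2 : ℝ) : ℂ) ∧
    ⟪((w - a) ∘L adjoint (w - a)) (ξ (1, 0)), ξ (1, 0)⟫_ℂ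
      = (((1 - Real.sqrt (1 - q ^ 4)) ^ 2 : ℝ) : ℂ) ∧
    ∀ n : ℕ, 2 ≤ n →
      ⟪((w - a) ∘L adjoint (w - a)) (ξ (n, 0)), ξ (n, 0)⟫_ℂ
        = (((2 - q ^ (2 * n + 2)) : ℝ) : ℂ) :=
  stmt_13_general q h1 ξ τ hτ a w ha0 ha hw
end

section
/- Let 0 < |q| < 1 and let ξ be the GNS vector of the Haar state φ of SU_q(2). Then ‖(w* - a*)ξ‖ ≤ 3q², where the norm squared equals φ((w-a)(w-a)*). -/
/-!
Write `B = w - a`. Since `w` permutes the basis vectors and `a` is a weighted backward shift,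
`B* ξ_{n,0} = ξ_{τ⁻¹ n,0} - c_n ξ_{n+1,0}` with `c_n = √(1 - q^{2(n+1)})`, so every term
`‖B* ξ_{n,0}‖²` of `φ(BB*) = (1 - q²) Σ q^{2n} ‖B* ξ_{n,0}‖²` is at most `2`. For `n = 0, 1`
the two basis vectors coincide (`τ 1 = 0`, `τ 2 = 1`), and the term `(1 - c_n)²` is at most `q⁴`
because `1 - √(1 - y) ≤ y`. Summing the geometric tail gives `φ(BB*) ≤ 3q⁴ ≤ (3q²)²`.
-/

open scoped InnerProductSpace ComplexConjugate
open ContinuousLinearMap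

theorem Orthonormal.norm_sub_ofReal_smul_sq {ι 𝕜 E : Type*} [RCLike 𝕜] [NormedAddCommGroup E]
    [InnerProductSpace 𝕜 E] [DecidableEq ι] {v : ι → E} (hv : Orthonormal 𝕜 v) (i j : ι)
    (t : ℝ) : ‖v i - (t : 𝕜) • v j‖ ^ 2 = if i = j then (1 - t) ^ 2 else 1 + t ^ 2 := by
  rw [@norm_sub_sq 𝕜, inner_smul_right, orthonormal_iff_ite.mp hv, norm_smul, hv.1, hv.1,
    RCLike.norm_ofReal, mul_one, sq_abs]
  split_ifs
  · simp only [one_pow, mul_one, RCLike.ofReal_re]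
    ring
  · simp only [one_pow, mul_zero, map_zero, sub_zero]

namespace HilbertBasis

variable {ι 𝕜 E : Type*} [RCLike 𝕜] [NormedAddCommGroup E] [InnerProductSpace 𝕜 E]

theorem ext_inner (b : HilbertBasis ι 𝕜 E) {u v : E} (h : ∀ i, ⟪b i, u⟫_𝕜 = ⟪b i, v⟫_𝕜) :
    u = v :=
  b.repr.injective <| lp.ext <| funext fun i ↦ by simp only [b.repr_apply_apply, h]

variable [CompleteSpace E]

theorem adjoint_apply_of_apply_eq_comp (b : HilbertBasis ι 𝕜 E) {T : E →L[𝕜] E} {σ : ι → ι}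
    (hσ : σ.Injective) (hT : ∀ i, T (b i) = b (σ i)) (i : ι) :
    adjoint T (b (σ i)) = b i := by
  classical
  refine b.ext_inner fun j ↦ ?_
  rw [adjoint_inner_right, hT, orthonormal_iff_ite.mp b.orthonormal,
    orthonormal_iff_ite.mp b.orthonormal, hσ.eq_iff]

variable {κ : Type*}

theorem adjoint_apply_of_apply_succ_eq_smul (b : HilbertBasis (ℕ × κ) 𝕜 E) {T : E →L[𝕜] E}
    (c : ℕ → 𝕜) (h0 : ∀ k, T (b (0, k)) = 0) (hT : ∀ n k, T (b (n + 1, k)) = c n • b (n, k))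
    (n : ℕ) (k : κ) : adjoint T (b (n, k)) = conj (c n) • b (n + 1, k) := by
  classical
  refine b.ext_inner fun ⟨m, l⟩ ↦ ?_
  rw [adjoint_inner_right, inner_smul_right, orthonormal_iff_ite.mp b.orthonormal]
  rcases m with _ | m
  · simp [h0]
  · rw [hT, inner_smul_left, orthonormal_iff_ite.mp b.orthonormal]
    by_cases hm : m = n <;> simp [hm]

theorem norm_sq_adjoint_sub_apply (b : HilbertBasis (ℕ × κ) 𝕜 E) {w a : E →L[𝕜] E}
    {τ : ℕ → ℕ} (hτ : τ.Injective) (hw : ∀ n k, w (b (n, k)) = b (τ n, k)) (c : ℕ → ℝ)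
    (ha0 : ∀ k, a (b (0, k)) = 0) (ha : ∀ n k, a (b (n + 1, k)) = (c n : 𝕜) • b (n, k))
    (m : ℕ) (k : κ) :
    ‖adjoint (w - a) (b (τ m, k))‖ ^ 2 =
      if m = τ m + 1 then (1 - c (τ m)) ^ 2 else 1 + c (τ m) ^ 2 := by
  classical
  have hw_adj : adjoint w (b (τ m, k)) = b (m, k) :=
    b.adjoint_apply_of_apply_eq_comp (σ := Prod.map τ id) (hτ.prodMap Function.injective_id)
      (fun i ↦ hw i.1 i.2) (m, k)
  rw [map_sub, sub_apply, hw_adj,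
    b.adjoint_apply_of_apply_succ_eq_smul (fun n ↦ (c n : 𝕜)) ha0 ha, RCLike.conj_ofReal,
    b.orthonormal.norm_sub_ofReal_smul_sq]
  simp only [Prod.mk.injEq, and_true]

end HilbertBasis

theorem one_sub_sqrt_one_sub_pow_sq_le {x : ℝ} (hx0 : 0 ≤ x) (hx1 : x ≤ 1) (n : ℕ) :
    (1 - √(1 - x ^ (n + 1))) ^ 2 ≤ x ^ 2 := by
  have hy0 : 0 ≤ x ^ (n + 1) := pow_nonneg hx0 _
  have hyx : x ^ (n + 1) ≤ x := pow_le_of_le_one hx0 hx1 n.succ_ne_zero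
  have hle : 1 - x ^ (n + 1) ≤ √(1 - x ^ (n + 1)) := by
    rw [Real.le_sqrt (by linarith) (by linarith)]
    nlinarith
  have hge : √(1 - x ^ (n + 1)) ≤ 1 := Real.sqrt_le_one.mpr (by linarith)
  exact pow_le_pow_left₀ (by linarith) (by linarith) 2

theorem one_sub_mul_tsum_pow_mul_le {x C : ℝ} (hx0 : 0 ≤ x) (hx1 : x < 1) {r : ℕ → ℝ}
    (hr : ∀ n, 0 ≤ r n) (hC : ∀ n, r n ≤ C) (h0 : r 0 ≤ x ^ 2) (h1 : r 1 ≤ x ^ 2) :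
    (1 - x) * ∑' n, x ^ n * r n ≤ (1 + C) * x ^ 2 := by
  set f : ℕ → ℝ := fun n ↦ x ^ n * r n with hf
  have hgeom : HasSum (fun n ↦ C * x ^ 2 * x ^ n) (C * x ^ 2 * (1 - x)⁻¹) :=
    (hasSum_geometric_of_lt_one hx0 hx1).mul_left _
  have htail_le : ∀ n, f (n + 2) ≤ C * x ^ 2 * x ^ n := fun n ↦
    calc x ^ (n + 2) * r (n + 2) ≤ x ^ (n + 2) * C := by gcongr; exact hC _
      _ = C * x ^ 2 * x ^ n := by ring
  have htail : Summable fun n ↦ f (n + 2) :=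
    .of_nonneg_of_le (fun n ↦ mul_nonneg (pow_nonneg hx0 _) (hr _)) htail_le hgeom.summable
  have htail_bound : (1 - x) * ∑' n, f (n + 2) ≤ C * x ^ 2 := by
    have h := htail.tsum_le_tsum htail_le hgeom.summable
    rw [hgeom.tsum_eq] at h
    calc (1 - x) * ∑' n, f (n + 2) ≤ (1 - x) * (C * x ^ 2 * (1 - x)⁻¹) := by gcongr
      _ = C * x ^ 2 := by field_simp [(sub_pos.mpr hx1).ne']
  have hhead : (1 - x) * (r 0 + x * r 1) ≤ x ^ 2 :=
    calc (1 - x) * (r 0 + x * r 1) ≤ (1 - x) * (x ^ 2 + x * x ^ 2) := by gcongr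
      _ ≤ x ^ 2 := by nlinarith [mul_nonneg hx0 (sq_nonneg x)]
  rw [← ((summable_nat_add_iff (f := f) 2).mp htail).sum_add_tsum_nat_add 2,
    Finset.sum_range_succ, Finset.sum_range_one]
  simp only [hf, pow_zero, pow_one, one_mul] at hhead htail_bound ⊢
  linarith

theorem bijective_of_three_cycle {τ : ℕ → ℕ}
    (hτ : τ 0 = 2 ∧ τ 1 = 0 ∧ τ 2 = 1 ∧ ∀ n, 3 ≤ n → τ n = n) : τ.Bijective := by
  obtain ⟨h0, h1, h2, h3⟩ := hτ
  have hτ_eq : ∀ n, τ n = if n = 0 then 2 else if n = 1 then 0 else if n = 2 then 1 else n := by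
    rintro (_ | _ | _ | n)
    · simpa using h0
    · simpa using h1
    · simpa using h2
    · simpa using h3 (n + 3) (by omega)
  refine ⟨fun m n h ↦ ?_, fun n ↦ ?_⟩
  · rw [hτ_eq, hτ_eq] at h
    split_ifs at h <;> omega
  · rcases n with _ | _ | _ | n
    exacts [⟨1, h1⟩, ⟨2, h2⟩, ⟨0, h0⟩, ⟨n + 3, h3 (n + 3) (by omega)⟩]

theorem stmt_14_general (q : ℝ) (h1 : |q| < 1)
    {H : Type*} [NormedAddCommGroup H] [InnerProductSpace ℂ H] [CompleteSpace H]
    (ξ : HilbertBasis (ℕ × ℤ) ℂ H)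
    (τ : ℕ → ℕ)
    (hτ : τ 0 = 2 ∧ τ 1 = 0 ∧ τ 2 = 1 ∧ ∀ n, 3 ≤ n → τ n = n)
    (a w : H →L[ℂ] H)
    (ha0 : ∀ k : ℤ, a (ξ (0, k)) = 0)
    (ha : ∀ (n : ℕ) (k : ℤ),
      a (ξ (n + 1, k)) = (Real.sqrt (1 - q ^ (2 * (n + 1))) : ℂ) • ξ (n, k))
    (hw : ∀ (n : ℕ) (k : ℤ), w (ξ (n, k)) = ξ (τ n, k))
    (φ : (H →L[ℂ] H) → ℝ)
    (hφ : ∀ x : H →L[ℂ] H,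
      φ x = (1 - q ^ 2) *
        ∑' n : ℕ, q ^ (2 * n) * (⟪x (ξ (n, 0)), ξ (n, 0)⟫_ℂ).re) :
    Real.sqrt (φ ((w - a) ∘L adjoint (w - a))) ≤ 3 * q ^ 2 := by
  have hτbij := bijective_of_three_cycle hτ
  have hq0 : 0 ≤ q ^ 2 := sq_nonneg q
  have hq1 : q ^ 2 < 1 := (sq_lt_one_iff_abs_lt_one q).mpr h1
  set c : ℕ → ℝ := fun n ↦ √(1 - (q ^ 2) ^ (n + 1))
  have hc : ∀ n, 0 ≤ c n ∧ c n ≤ 1 := fun n ↦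
    ⟨Real.sqrt_nonneg _, Real.sqrt_le_one.mpr (by linarith [pow_nonneg hq0 (n + 1)])⟩
  have hr := ξ.norm_sq_adjoint_sub_apply hτbij.1 hw c ha0
    (fun n k ↦ by rw [ha, pow_mul]; rfl) (k := 0)
  have hφr : φ ((w - a) ∘L adjoint (w - a)) =
      (1 - q ^ 2) * ∑' n, (q ^ 2) ^ n * ‖adjoint (w - a) (ξ (n, 0))‖ ^ 2 := by
    rw [hφ]
    congr with n
    rw [pow_mul, apply_norm_sq_eq_inner_adjoint_left, adjoint_adjoint]
    rfl
  have hr_le : ∀ n, ‖adjoint (w - a) (ξ (n, 0))‖ ^ 2 ≤ 2 := fun n ↦ by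
    obtain ⟨m, rfl⟩ := hτbij.2 n
    rw [hr]
    split_ifs <;> nlinarith [hc (τ m)]
  have hr_small : ∀ n, τ (n + 1) = n → ‖adjoint (w - a) (ξ (n, 0))‖ ^ 2 ≤ (q ^ 2) ^ 2 :=
    fun n hn ↦ by
      have h := hr (n + 1)
      rw [hn, if_pos rfl] at h
      exact h.trans_le (one_sub_sqrt_one_sub_pow_sq_le hq0 hq1.le n)
  have hφ_le : φ ((w - a) ∘L adjoint (w - a)) ≤ (3 * q ^ 2) ^ 2 := by
    rw [hφr]
    calc _ ≤ (1 + 2) * (q ^ 2) ^ 2 :=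
          one_sub_mul_tsum_pow_mul_le hq0 hq1 (fun n ↦ by positivity) hr_le
            (hr_small 0 hτ.2.1) (hr_small 1 hτ.2.2.1)
      _ ≤ (3 * q ^ 2) ^ 2 := by nlinarith
  exact (Real.sqrt_le_left (by positivity)).mpr hφ_le

theorem stmt_14 (q : ℝ) (h0 : 0 < |q|) (h1 : |q| < 1)
    {H : Type*} [NormedAddCommGroup H] [InnerProductSpace ℂ H] [CompleteSpace H]
    (ξ : HilbertBasis (ℕ × ℤ) ℂ H)
    (τ : ℕ → ℕ)
    (hτ : τ 0 = 2 ∧ τ 1 = 0 ∧ τ 2 = 1 ∧ ∀ n, 3 ≤ n → τ n = n)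
    (a w : H →L[ℂ] H)
    (ha0 : ∀ k : ℤ, a (ξ (0, k)) = 0)
    (ha : ∀ (n : ℕ) (k : ℤ),
      a (ξ (n + 1, k)) = (Real.sqrt (1 - q ^ (2 * (n + 1))) : ℂ) • ξ (n, k))
    (hw : ∀ (n : ℕ) (k : ℤ), w (ξ (n, k)) = ξ (τ n, k))
    (φ : (H →L[ℂ] H) → ℝ)
    (hφ : ∀ x : H →L[ℂ] H,
      φ x = (1 - q ^ 2) *
        ∑' n : ℕ, q ^ (2 * n) * (⟪x (ξ (n, 0)), ξ (n, 0)⟫_ℂ).re) :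
    Real.sqrt (φ ((w - a) ∘L adjoint (w - a))) ≤ 3 * q ^ 2 :=
  stmt_14_general q h1 ξ τ hτ a w ha0 ha hw φ hφ
end
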